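/- In the polynomial ring H^G_{k⁺ⁱ}, for every α ≥ 0: (−1)^α ξ^α = Σ_{f=0}^{α} ψ^G(x(₊ᵢk)_{i+1,α−f}) · φ^G(x̄(k)_{i+1,f}) and (−1)^α ξ^α = Σ_{g=0}^{α} ψ^G(x̄(₊ᵢk)_{i,α−g}) · φ^G(x(k)_{i,g}). -/
import Mathlib


/-!
Equivariant cohomology rings of `n`-step partial flag varieties (polynomial rings),
following Khovanov–Lauda, Section 5.3 (Equivariant representation).
-/

open MvPolynomial Finset

noncomputable section

variable (𝕜 : Type) [Field 𝕜]

/-- The generator `x(k)_{j,α}` of the equivariant cohomology ring `H^G_k` (a polynomial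
ring), with the conventions `x(k)_{j,0} = 1` and `x(k)_{j,α} = 0` out of range. -/
def xp (n : ℕ) (k : ℕ → ℕ) (j α : ℕ) : MvPolynomial (ℕ × ℕ) 𝕜 :=
  if α = 0 then 1 else if 1 ≤ j ∧ j ≤ n ∧ α ≤ k j - k (j - 1) then X (j, α) else 0

/-- The dual element `x̄(k)_{j,α} ∈ H^G_k`, defined recursively by `x̄(k)_{j,0} = 1` and
`x̄(k)_{j,α} = -∑_{f=1}^{α} x(k)_{j,f} x̄(k)_{j,α-f}` for `α ≥ 1`. -/
def xbarG (n : ℕ) (k : ℕ → ℕ) (j : ℕ) : ℕ → MvPolynomial (ℕ × ℕ) 𝕜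
  | 0 => 1
  | (α + 1) => - ∑ f ∈ Finset.range (α + 1), xp 𝕜 n k j (f + 1) * xbarG n k j (α - f)
  termination_by α => α
  decreasing_by exact Nat.lt_succ_of_le (Nat.sub_le α f)

/-- The dual element with an integer index, with `x̄(k)_{j,α} = 0` for `α < 0`. -/
def xbarGZ (n : ℕ) (k : ℕ → ℕ) (j : ℕ) (α : ℤ) : MvPolynomial (ℕ × ℕ) 𝕜 :=
  if 0 ≤ α then xbarG 𝕜 n k j α.toNat else 0

/-- The sequence `₊ᵢk`, obtained from `k` by replacing `k i` with `k i + 1`. -/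
def kup (k : ℕ → ℕ) (i : ℕ) : ℕ → ℕ := fun j => if j = i then k i + 1 else k j

/-- The generator `x_{j,α}` (for `j ≠ i + 1`) of `H^G_{k⁺ⁱ}`, with conventions. -/
def yp (n : ℕ) (k : ℕ → ℕ) (i j α : ℕ) : MvPolynomial (ℕ × ℕ) 𝕜 :=
  if α = 0 then 1
  else if 1 ≤ j ∧ j ≤ n ∧ j ≠ i + 1 ∧ α ≤ k j - k (j - 1) then X (j, α) else 0

/-- The generator `x'_{i+1,α}` of `H^G_{k⁺ⁱ}`, with conventions. -/
def y'p (n : ℕ) (k : ℕ → ℕ) (i α : ℕ) : MvPolynomial (ℕ × ℕ) 𝕜 :=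
  if α = 0 then 1 else if α ≤ k (i + 1) - k i - 1 then X (i + 1, α) else 0

/-- The degree `2` generator `ξ` of `H^G_{k⁺ⁱ}`. -/
def xiG : MvPolynomial (ℕ × ℕ) 𝕜 := X (0, 1)

/-- `φ^G : H^G_k → H^G_{k⁺ⁱ}` is the `𝕜`-algebra homomorphism determined by
`φ^G(x(k)_{j,α}) = x_{j,α}` for `j ≠ i+1` and
`φ^G(x(k)_{i+1,α}) = ξ·x'_{i+1,α-1} + x'_{i+1,α}`. -/
def IsPhiG (n : ℕ) (k : ℕ → ℕ) (i : ℕ)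
    (φ : MvPolynomial (ℕ × ℕ) 𝕜 →ₐ[𝕜] MvPolynomial (ℕ × ℕ) 𝕜) : Prop :=
  (∀ j α : ℕ, j ≠ i + 1 → φ (xp 𝕜 n k j α) = yp 𝕜 n k i j α) ∧
  (∀ α : ℕ, 1 ≤ α → φ (xp 𝕜 n k (i + 1) α) =
    xiG 𝕜 * y'p 𝕜 n k i (α - 1) + y'p 𝕜 n k i α)

/-- `ψ^G : H^G_{₊ᵢk} → H^G_{k⁺ⁱ}` is the `𝕜`-algebra homomorphism determined by
`ψ^G(x(₊ᵢk)_{j,α}) = x_{j,α}` for `j ≠ i, i+1`, `ψ^G(x(₊ᵢk)_{i+1,α}) = x'_{i+1,α}`,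
and `ψ^G(x(₊ᵢk)_{i,α}) = ξ·x_{i,α-1} + x_{i,α}`. -/
def IsPsiG (n : ℕ) (k : ℕ → ℕ) (i : ℕ)
    (ψ : MvPolynomial (ℕ × ℕ) 𝕜 →ₐ[𝕜] MvPolynomial (ℕ × ℕ) 𝕜) : Prop :=
  (∀ j α : ℕ, j ≠ i → j ≠ i + 1 → ψ (xp 𝕜 n (kup k i) j α) = yp 𝕜 n k i j α) ∧
  (∀ α : ℕ, ψ (xp 𝕜 n (kup k i) (i + 1) α) = y'p 𝕜 n k i α) ∧
  (∀ α : ℕ, 1 ≤ α → ψ (xp 𝕜 n (kup k i) i α) =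
    xiG 𝕜 * yp 𝕜 n k i i (α - 1) + yp 𝕜 n k i i α)

end

section GStatements

variable (𝕜 : Type) [Field 𝕜]

lemma xbarG_zero (n : ℕ) (k : ℕ → ℕ) (j : ℕ) : xbarG 𝕜 n k j 0 = 1 := by
  rw [xbarG]

lemma xbarG_succ (n : ℕ) (k : ℕ → ℕ) (j α : ℕ) :
    xbarG 𝕜 n k j (α + 1)
      = - ∑ f ∈ Finset.range (α + 1), xp 𝕜 n k j (f + 1) * xbarG 𝕜 n k j (α - f) := by
  rw [xbarG]

lemma xp_zero (n : ℕ) (k : ℕ → ℕ) (j : ℕ) : xp 𝕜 n k j 0 = 1 := by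
  simp [xp]

lemma conv_eq_zero (n : ℕ) (k : ℕ → ℕ) (j α : ℕ) :
    ∑ f ∈ Finset.range (α + 2), xp 𝕜 n k j f * xbarG 𝕜 n k j (α + 1 - f) = 0 := by
  rw [Finset.sum_range_succ']
  simp only [Nat.succ_sub_succ, Nat.sub_zero, xp_zero, one_mul, xbarG_succ]
  ring

theorem stmt15 (n N i : ℕ) (k : ℕ → ℕ)
    (hn : 1 ≤ n) (hk0 : k 0 = 0) (hkN : k n = N) (hmono : ∀ j, j < n → k j ≤ k (j + 1))
    (hi1 : 1 ≤ i) (hin : i + 1 ≤ n) (hik : k i < k (i + 1))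
    (φG : MvPolynomial (ℕ × ℕ) 𝕜 →ₐ[𝕜] MvPolynomial (ℕ × ℕ) 𝕜) (hφ : IsPhiG 𝕜 n k i φG)
    (ψG : MvPolynomial (ℕ × ℕ) 𝕜 →ₐ[𝕜] MvPolynomial (ℕ × ℕ) 𝕜) (hψ : IsPsiG 𝕜 n k i ψG) :
    ∀ α : ℕ,
      (-1 : MvPolynomial (ℕ × ℕ) 𝕜) ^ α * xiG 𝕜 ^ α =
        ∑ f ∈ Finset.range (α + 1),
          ψG (xp 𝕜 n (kup k i) (i + 1) (α - f)) * φG (xbarG 𝕜 n k (i + 1) f) ∧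
      (-1 : MvPolynomial (ℕ × ℕ) 𝕜) ^ α * xiG 𝕜 ^ α =
        ∑ g ∈ Finset.range (α + 1),
          ψG (xbarG 𝕜 n (kup k i) i (α - g)) * φG (xp 𝕜 n k i g) := by
  obtain ⟨hφ1, hφ2⟩ := hφ
  obtain ⟨hψ1, hψ2, hψ3⟩ := hψ
  have hy'0 : y'p 𝕜 n k i 0 = 1 := by simp [y'p]
  have hy0 : yp 𝕜 n k i i 0 = 1 := by simp [yp]
  -- Part 1 key, in "convolution" order
  have key1 : ∀ α : ℕ, ∑ f ∈ Finset.range (α + 1),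
      y'p 𝕜 n k i f * φG (xbarG 𝕜 n k (i + 1) (α - f))
        = (-1 : MvPolynomial (ℕ × ℕ) 𝕜) ^ α * xiG 𝕜 ^ α := by
    intro α
    induction α with
    | zero => simp [hy'0, xbarG_zero]
    | succ α ih =>
      have h0 := congrArg φG (conv_eq_zero 𝕜 n k (i + 1) α)
      rw [map_sum, map_zero, Finset.sum_range_succ'] at h0
      simp only [map_mul, Nat.succ_sub_succ, Nat.sub_zero, xp_zero, map_one, one_mul] at h0
      have hrw : ∀ f, φG (xp 𝕜 n k (i + 1) (f + 1))
          = xiG 𝕜 * y'p 𝕜 n k i f + y'p 𝕜 n k i (f + 1) := by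
        intro f
        have := hφ2 (f + 1) (by omega)
        simpa using this
      simp only [hrw, add_mul, Finset.sum_add_distrib, mul_assoc, ← Finset.mul_sum] at h0
      rw [ih] at h0
      rw [Finset.sum_range_succ']
      simp only [Nat.succ_sub_succ, Nat.sub_zero, hy'0, one_mul]
      linear_combination h0
  -- Part 2 key
  have key2 : ∀ α : ℕ, ∑ g ∈ Finset.range (α + 1),
      ψG (xbarG 𝕜 n (kup k i) i (α - g)) * yp 𝕜 n k i i g
        = (-1 : MvPolynomial (ℕ × ℕ) 𝕜) ^ α * xiG 𝕜 ^ α := by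
    intro α
    induction α with
    | zero => simp [hy0, xbarG_zero]
    | succ α ih =>
      have h0 := congrArg ψG (conv_eq_zero 𝕜 n (kup k i) i α)
      rw [map_sum, map_zero, Finset.sum_range_succ'] at h0
      simp only [map_mul, Nat.succ_sub_succ, Nat.sub_zero, xp_zero, map_one, one_mul] at h0
      have hrw : ∀ g, ψG (xp 𝕜 n (kup k i) i (g + 1))
          = xiG 𝕜 * yp 𝕜 n k i i g + yp 𝕜 n k i i (g + 1) := by
        intro g
        have := hψ3 (g + 1) (by omega)
        simpa using this
      simp only [hrw, add_mul, Finset.sum_add_distrib, mul_assoc, ← Finset.mul_sum] at h0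
      -- commute factors so that ih applies
      have hc1 : ∑ g ∈ Finset.range (α + 1),
          yp 𝕜 n k i i g * ψG (xbarG 𝕜 n (kup k i) i (α - g))
            = ∑ g ∈ Finset.range (α + 1),
          ψG (xbarG 𝕜 n (kup k i) i (α - g)) * yp 𝕜 n k i i g :=
        Finset.sum_congr rfl fun _ _ => mul_comm _ _
      have hc2 : ∑ g ∈ Finset.range (α + 1),
          yp 𝕜 n k i i (g + 1) * ψG (xbarG 𝕜 n (kup k i) i (α - g))
            = ∑ g ∈ Finset.range (α + 1),
          ψG (xbarG 𝕜 n (kup k i) i (α - g)) * yp 𝕜 n k i i (g + 1) :=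
        Finset.sum_congr rfl fun _ _ => mul_comm _ _
      rw [hc1, hc2, ih] at h0
      rw [Finset.sum_range_succ']
      simp only [Nat.succ_sub_succ, Nat.sub_zero, hy0, mul_one]
      linear_combination h0
  intro α
  constructor
  · -- reflect key1
    have hrefl := Finset.sum_range_reflect
      (fun f => y'p 𝕜 n k i f * φG (xbarG 𝕜 n k (i + 1) (α - f))) (α + 1)
    have hcong : ∑ f ∈ Finset.range (α + 1),
        y'p 𝕜 n k i (α + 1 - 1 - f) * φG (xbarG 𝕜 n k (i + 1) (α - (α + 1 - 1 - f)))
          = ∑ f ∈ Finset.range (α + 1),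
        y'p 𝕜 n k i (α - f) * φG (xbarG 𝕜 n k (i + 1) f) := by
      apply Finset.sum_congr rfl
      intro f hf
      simp only [Finset.mem_range] at hf
      have h1 : α + 1 - 1 - f = α - f := by omega
      have h2 : α - (α - f) = f := by omega
      rw [h1, h2]
    rw [hcong] at hrefl
    simp only [hψ2]
    rw [hrefl, key1]
  · simp only [fun g => hφ1 i g (by omega)]
    rw [key2]

end GStatements
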